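/- Assume Γ is a tree with exactly one essential vertex and T = Γ. Then every critical cell of UD^nΓ has dimension at most 1; that is, there are no critical cells of dimension 2 or greater. -/

import Mathlib

open SimpleGraph

attribute [local instance] Classical.propDecidable

namespace GraphBraid

/-- The degree of a vertex, defined via `Set.ncard` to avoid decidability assumptions. -/
noncomputable def ncdeg {V : Type} (H : SimpleGraph V) (v : V) : ℕ := (H.neighborSet v).ncard

/-- The basic setup: a finite connected simple graph `G` with a spanning tree `T`,
a root `root` of degree one in `T`, and a labelling of the edges of `T` incident to each
vertex `u` by the numbers `0, …, d_T(u) - 1`, where the edge towards the root receives the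
label `0` (and the unique edge at the root receives the label `1`). -/
structure Setup (V : Type) [Fintype V] [DecidableEq V] where
  G : SimpleGraph V
  G_conn : G.Connected
  T : SimpleGraph V
  T_le : T ≤ G
  T_tree : T.IsTree
  root : V
  root_deg : ncdeg T root = 1
  label : V → V → ℕ
  label_bij : ∀ u : V, u ≠ root → Set.BijOn (label u) (T.neighborSet u) (Set.Iio (ncdeg T u))
  label_zero : ∀ u : V, u ≠ root → ∀ w : V, T.Adj u w →
    (label u w = 0 ↔ T.dist root w + 1 = T.dist root u)
  label_root : ∀ w : V, T.Adj root w → label root w = 1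

namespace Setup

variable {V : Type} [Fintype V] [DecidableEq V] (S : Setup V)

/-- The unique geodesic (path) in the tree `T` from `u` to `w`. -/
noncomputable def geod (u w : V) : S.T.Walk u w := (S.T_tree.existsUnique_path u w).choose

/-- `g(u,w)`: the label at `u` of the first edge of the tree geodesic from `u` to `w`,
with `g(u,u) = 0`. -/
noncomputable def gfun (u w : V) : ℕ :=
  if u = w then 0 else S.label u ((S.geod u w).getVert 1)

lemma exists_wedge (u w : V) :
    ∃ x : V, (x ∈ (S.geod S.root u).support ∧ x ∈ (S.geod S.root w).support) ∧
      ∀ y : V, y ∈ (S.geod S.root u).support → y ∈ (S.geod S.root w).support →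
        S.T.dist S.root y ≤ S.T.dist S.root x := by
  classical
  have hne : ((S.geod S.root u).support.toFinset ∩
      (S.geod S.root w).support.toFinset).Nonempty :=
    ⟨S.root, by simp [SimpleGraph.Walk.start_mem_support]⟩
  obtain ⟨x, hx, hmax⟩ := Finset.exists_max_image _ (fun y => S.T.dist S.root y) hne
  simp only [Finset.mem_inter, List.mem_toFinset] at hx hmax
  exact ⟨x, ⟨hx.1, hx.2⟩, fun y h1 h2 => hmax y ⟨h1, h2⟩⟩

/-- `u ∧ w`: the vertex farthest from the root lying on both tree geodesics from the
root to `u` and from the root to `w`. -/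
noncomputable def wedge (u w : V) : V := (S.exists_wedge u w).choose

/-- The order on vertices: `u ≤ w` iff `u ∧ w = u`, or `u ∧ w ≠ u` and
`g(u ∧ w, u) < g(u ∧ w, w)`. -/
def vle (u w : V) : Prop :=
  S.wedge u w = u ∨ (S.wedge u w ≠ u ∧ S.gfun (S.wedge u w) u < S.gfun (S.wedge u w) w)

/-- The associated strict order on vertices. -/
def vlt (u w : V) : Prop := S.vle u w ∧ u ≠ w

/-- `ι(e)`: the larger endpoint of the edge `e` in the vertex order. -/
noncomputable def iota (e : Sym2 V) : V :=
  if S.vle (Quot.out e).1 (Quot.out e).2 then (Quot.out e).2 else (Quot.out e).1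

/-- `τ(e)`: the smaller endpoint of the edge `e` in the vertex order. -/
noncomputable def tau (e : Sym2 V) : V :=
  if S.vle (Quot.out e).1 (Quot.out e).2 then (Quot.out e).1 else (Quot.out e).2

/-- `e(v)`: the edge of `T` incident to `v` lying on the tree geodesic from `v` to the root. -/
noncomputable def eV (v : V) : Sym2 V := s(v, (S.geod v S.root).getVert 1)

/-- A cell of `UD^n Γ`: an `n`-element set whose elements are vertices (encoded as
diagonal elements of `Sym2 V`) and closed edges of `G`, no two distinct elements of which
share a vertex. -/
def IsCell (n : ℕ) (c : Finset (Sym2 V)) : Prop :=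
  c.card = n ∧ (∀ s ∈ c, s.IsDiag ∨ s ∈ S.G.edgeSet) ∧
    ∀ s ∈ c, ∀ t ∈ c, s ≠ t → ∀ x : V, x ∈ s → x ∉ t

/-- The dimension of a cell: the number of edges it contains. -/
noncomputable def dim (c : Finset (Sym2 V)) : ℕ := (c.filter (fun s => ¬ s.IsDiag)).card

/-- A vertex `v` is blocked in `c` if `v` is the root, or `e(v)` shares a vertex with some
element of `c` other than `v`. -/
def Blocked (c : Finset (Sym2 V)) (v : V) : Prop :=
  v = S.root ∨ ∃ s ∈ c, s ≠ Sym2.diag v ∧ ∃ x : V, x ∈ S.eV v ∧ x ∈ s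

/-- A vertex `v` is unblocked in `c` if it belongs to `c` and is not blocked. -/
def Unblocked (c : Finset (Sym2 V)) (v : V) : Prop := Sym2.diag v ∈ c ∧ ¬ S.Blocked c v

/-- The elementary reduction of `c` from the vertex `v`: replace `v` by the edge `e(v)`. -/
noncomputable def redFrom (c : Finset (Sym2 V)) (v : V) : Finset (Sym2 V) :=
  insert (S.eV v) (c.erase (Sym2.diag v))

/-- `c'` is the principal elementary reduction of `c`: it is the elementary reduction of `c`
from the smallest unblocked vertex of `c`. -/
def PrincipalRedOf (c c' : Finset (Sym2 V)) : Prop :=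
  ∃ v : V, S.Unblocked c v ∧ (∀ u : V, S.Unblocked c u → S.vle v u) ∧ c' = S.redFrom c v

/-- Auxiliary definition of redundancy, by induction on the dimension: a cell of
dimension `i` is redundant iff it has an unblocked vertex and it is not the principal
elementary reduction of a redundant cell of dimension `i - 1`. -/
def RedundantAux (n : ℕ) : ℕ → Finset (Sym2 V) → Prop
  | 0, c => ∃ v, S.Unblocked c v
  | (i + 1), c => (∃ v, S.Unblocked c v) ∧
      ¬ ∃ c₀, S.IsCell n c₀ ∧ dim c₀ = i ∧ RedundantAux n i c₀ ∧ S.PrincipalRedOf c₀ c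

/-- A cell is redundant if the discrete vector field `W` is defined on it. -/
def Redundant (n : ℕ) (c : Finset (Sym2 V)) : Prop := S.RedundantAux n (dim c) c

/-- A cell is collapsible if it lies in the image of `W`. -/
def Collapsible (n : ℕ) (c : Finset (Sym2 V)) : Prop :=
  ∃ c₀, S.IsCell n c₀ ∧ S.Redundant n c₀ ∧ S.PrincipalRedOf c₀ c

/-- A cell is critical if it is neither redundant nor collapsible. -/
def Critical (n : ℕ) (c : Finset (Sym2 V)) : Prop :=
  ¬ S.Redundant n c ∧ ¬ S.Collapsible n c

/-- An edge `e` of the cell `c` is order-respecting in `c` if `e` lies in `T` and every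
vertex `v ∈ c` such that `e(v)` and `e` share the vertex `τ(e)` satisfies `v > ι(e)`. -/
def OrderResp (c : Finset (Sym2 V)) (e : Sym2 V) : Prop :=
  e ∈ c ∧ e ∈ S.T.edgeSet ∧
    ∀ v : V, v ≠ S.root → Sym2.diag v ∈ c → S.tau e ∈ S.eV v → S.vlt (S.iota e) v

/-- `e` is the minimal order-respecting edge of `c`. -/
def MinOrderResp (c : Finset (Sym2 V)) (e : Sym2 V) : Prop :=
  S.OrderResp c e ∧ ∀ e' : Sym2 V, S.OrderResp c e' → S.vle (S.iota e) (S.iota e')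

/-- `c'` is a face of `c` obtained by replacing one edge of `c` by one of its endpoints. -/
def IsFace (c' c : Finset (Sym2 V)) : Prop :=
  ∃ (e : Sym2 V) (x : V), e ∈ c ∧ ¬ e.IsDiag ∧ x ∈ e ∧ c' = insert (Sym2.diag x) (c.erase e)

/-- `Γ` is sufficiently subdivided for `n`: every path between distinct vertices of degree
`≠ 2` passes through at least `n - 1` edges, and every cycle has length at least `n + 1`. -/
def SuffSubdiv (n : ℕ) : Prop :=
  (∀ u v : V, u ≠ v → ncdeg S.G u ≠ 2 → ncdeg S.G v ≠ 2 →
    ∀ p : S.G.Walk u v, p.IsPath → n - 1 ≤ p.length) ∧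
  (∀ v : V, ∀ p : S.G.Walk v v, p.IsCycle → n + 1 ≤ p.length)

end Setup
section Toolkit


lemma mem_diag_iff {α : Type*} {x v : α} : x ∈ Sym2.diag v ↔ x = v := by
  simp [Sym2.diag]

namespace Setup

variable {V : Type} [Fintype V] [DecidableEq V] (S : Setup V)

lemma geod_isPath (u w : V) : (S.geod u w).IsPath :=
  (S.T_tree.existsUnique_path u w).choose_spec.1

lemma geod_unique {u w : V} (p : S.T.Walk u w) (hp : p.IsPath) : p = S.geod u w :=
  (S.T_tree.existsUnique_path u w).choose_spec.2 p hp

lemma tconn : S.T.Connected := S.T_tree.isConnected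

lemma length_geod (u w : V) : (S.geod u w).length = S.T.dist u w := by
  obtain ⟨p, hp⟩ := (S.tconn).exists_walk_length_eq_dist u w
  have hbp : p.bypass = S.geod u w := S.geod_unique _ p.bypass_isPath
  refine le_antisymm ?_ (SimpleGraph.dist_le _)
  calc (S.geod u w).length = p.bypass.length := by rw [hbp]
    _ ≤ p.length := p.length_bypass_le
    _ = S.T.dist u w := hp

lemma takeUntil_eq {a b x : V} (hx : x ∈ (S.geod a b).support) :
    (S.geod a b).takeUntil x hx = S.geod a x :=
  S.geod_unique _ ((S.geod_isPath a b).takeUntil hx)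

lemma dropUntil_eq {a b x : V} (hx : x ∈ (S.geod a b).support) :
    (S.geod a b).dropUntil x hx = S.geod x b :=
  S.geod_unique _ ((S.geod_isPath a b).dropUntil hx)

lemma dist_add_of_mem {a b x : V} (hx : x ∈ (S.geod a b).support) :
    S.T.dist a x + S.T.dist x b = S.T.dist a b := by
  have h := congrArg Walk.length ((S.geod a b).take_spec hx)
  rw [Walk.length_append, S.takeUntil_eq hx, S.dropUntil_eq hx, S.length_geod, S.length_geod,
    S.length_geod] at h
  exact h

lemma support_geod_subset_left {a b x : V} (hx : x ∈ (S.geod a b).support) :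
    (S.geod a x).support ⊆ (S.geod a b).support := by
  rw [← S.takeUntil_eq hx]; exact Walk.support_takeUntil_subset _ hx

lemma support_geod_subset_right {a b x : V} (hx : x ∈ (S.geod a b).support) :
    (S.geod x b).support ⊆ (S.geod a b).support := by
  rw [← S.dropUntil_eq hx]; exact Walk.support_dropUntil_subset _ hx

lemma support_split {a b x y : V} (hx : x ∈ (S.geod a b).support)
    (hy : y ∈ (S.geod a b).support) :
    y ∈ (S.geod a x).support ∨ y ∈ (S.geod x b).support := by
  rw [← S.takeUntil_eq hx, ← S.dropUntil_eq hx]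
  rw [← Walk.mem_support_append_iff]
  rw [(S.geod a b).take_spec hx]
  exact hy

lemma dist_eq_zero_iff {x y : V} : S.T.dist x y = 0 ↔ x = y := S.tconn.dist_eq_zero_iff

lemma same_dist_eq {a b x y : V} (hx : x ∈ (S.geod a b).support) (hy : y ∈ (S.geod a b).support)
    (hd : S.T.dist a x = S.T.dist a y) : x = y := by
  have Hx := S.dist_add_of_mem hx
  have Hy := S.dist_add_of_mem hy
  rcases S.support_split hx hy with h | h
  · have h1 := S.dist_add_of_mem h
    have h2 : S.T.dist y x = 0 := by omega
    exact (S.dist_eq_zero_iff.mp h2).symm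
  · have h1 := S.dist_add_of_mem h
    have h2 : S.T.dist x y = 0 := by omega
    exact S.dist_eq_zero_iff.mp h2

lemma dist_pos_of_ne {a b : V} (h : a ≠ b) : 0 < S.T.dist a b := S.tconn.pos_dist_of_ne h

lemma fs_adj {a b : V} (h : a ≠ b) : S.T.Adj a ((S.geod a b).getVert 1) := by
  have hl : 0 < (S.geod a b).length := by rw [S.length_geod]; exact S.dist_pos_of_ne h
  have h2 := (S.geod a b).adj_getVert_succ hl
  rwa [Walk.getVert_zero] at h2

lemma fs_mem {a b : V} (h : a ≠ b) : (S.geod a b).getVert 1 ∈ (S.geod a b).support := by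
  rw [Walk.mem_support_iff_exists_getVert]
  exact ⟨1, rfl, by rw [S.length_geod]; exact S.dist_pos_of_ne h⟩

lemma dist_adj {a b : V} (h : S.T.Adj a b) : S.T.dist a b = 1 := by
  refine le_antisymm ?_ (S.dist_pos_of_ne h.ne)
  have h2 := SimpleGraph.dist_le (Walk.cons h Walk.nil)
  simpa using h2

lemma fs_dist {a b : V} (h : a ≠ b) :
    S.T.dist ((S.geod a b).getVert 1) b + 1 = S.T.dist a b := by
  have h1 := S.dist_add_of_mem (S.fs_mem h)
  rw [S.dist_adj (S.fs_adj h)] at h1; omega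

lemma fs_unique {a b y : V} (h : a ≠ b) (hy : S.T.Adj a y)
    (hd : S.T.dist y b + 1 = S.T.dist a b) : y = (S.geod a b).getVert 1 := by
  have hna : a ∉ (S.geod y b).support := by
    intro hmem
    have h1 := S.dist_add_of_mem hmem
    have h0 := S.dist_pos_of_ne hy.ne.symm
    omega
  have hp : (Walk.cons hy (S.geod y b)).IsPath := (S.geod_isPath y b).cons hna
  have he := S.geod_unique _ hp
  have h2 := congrArg (fun p => Walk.getVert p 1) he
  simp only [Walk.getVert_cons_succ, Walk.getVert_zero] at h2
  exact h2

lemma wedge_spec (u w : V) :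
    S.wedge u w ∈ (S.geod S.root u).support ∧ S.wedge u w ∈ (S.geod S.root w).support ∧
      ∀ y : V, y ∈ (S.geod S.root u).support → y ∈ (S.geod S.root w).support →
        S.T.dist S.root y ≤ S.T.dist S.root (S.wedge u w) := by
  have h := (S.exists_wedge u w).choose_spec
  exact ⟨h.1.1, h.1.2, h.2⟩

lemma wedge_unique {u w x : V} (hx1 : x ∈ (S.geod S.root u).support)
    (hx2 : x ∈ (S.geod S.root w).support)
    (hmax : ∀ y : V, y ∈ (S.geod S.root u).support → y ∈ (S.geod S.root w).support →
      S.T.dist S.root y ≤ S.T.dist S.root x) : S.wedge u w = x := by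
  obtain ⟨h1, h2, h3⟩ := S.wedge_spec u w
  exact S.same_dist_eq h1 hx1 (le_antisymm (hmax _ h1 h2) (h3 _ hx1 hx2))

lemma wedge_comm (u w : V) : S.wedge u w = S.wedge w u := by
  obtain ⟨h1, h2, h3⟩ := S.wedge_spec w u
  exact S.wedge_unique h2 h1 (fun y hy1 hy2 => h3 y hy2 hy1)

lemma wedge_eq_left {u w : V} (h : u ∈ (S.geod S.root w).support) : S.wedge u w = u :=
  S.wedge_unique (Walk.end_mem_support _) h
    (fun y hy1 _ => by have h2 := S.dist_add_of_mem hy1; omega)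

lemma wedge_self (u : V) : S.wedge u u = u := S.wedge_eq_left (Walk.end_mem_support _)

lemma vle_refl (u : V) : S.vle u u := Or.inl (S.wedge_self u)

lemma gfun_self (u : V) : S.gfun u u = 0 := if_pos rfl

/-- The parent of a vertex: first vertex on the geodesic towards the root. -/
noncomputable def par (v : V) : V := (S.geod v S.root).getVert 1

lemma eV_eq (v : V) : S.eV v = s(v, S.par v) := rfl

lemma par_adj {v : V} (h : v ≠ S.root) : S.T.Adj v (S.par v) := S.fs_adj h

lemma par_dist {v : V} (h : v ≠ S.root) :
    S.T.dist S.root (S.par v) + 1 = S.T.dist S.root v := by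
  have h1 := S.fs_dist (a := v) (b := S.root) h
  have e1 : S.T.dist ((S.geod v S.root).getVert 1) S.root
      = S.T.dist S.root ((S.geod v S.root).getVert 1) := SimpleGraph.dist_comm
  have e2 : S.T.dist v S.root = S.T.dist S.root v := SimpleGraph.dist_comm
  show S.T.dist S.root ((S.geod v S.root).getVert 1) + 1 = S.T.dist S.root v
  omega

lemma par_unique {v y : V} (h : v ≠ S.root) (hy : S.T.Adj v y)
    (hd : S.T.dist S.root y + 1 = S.T.dist S.root v) : y = S.par v :=
  S.fs_unique h hy (by
    have e1 : S.T.dist y S.root = S.T.dist S.root y := SimpleGraph.dist_comm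
    have e2 : S.T.dist v S.root = S.T.dist S.root v := SimpleGraph.dist_comm
    omega)

lemma adj_dist_cases {a b : V} (h : S.T.Adj a b) :
    S.T.dist S.root a + 1 = S.T.dist S.root b ∨ S.T.dist S.root b + 1 = S.T.dist S.root a := by
  by_cases hb : b ∈ (S.geod S.root a).support
  · right
    have h1 := S.dist_add_of_mem hb
    rw [S.dist_adj h.symm] at h1
    omega
  · left
    have hp : ((S.geod S.root a).concat h).IsPath := by
      rw [← Walk.isPath_reverse_iff, Walk.reverse_concat]
      exact ((S.geod_isPath S.root a).reverse).cons
        (by rwa [Walk.support_reverse, List.mem_reverse])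
    have he := S.geod_unique _ hp
    have h2 := congrArg Walk.length he
    rw [Walk.length_concat, S.length_geod, S.length_geod] at h2
    omega

lemma adj_mem_support {a b : V} (h : S.T.Adj a b)
    (hd : S.T.dist S.root a + 1 = S.T.dist S.root b) :
    a ∈ (S.geod S.root b).support := by
  have hb : b ∉ (S.geod S.root a).support := by
    intro hmem
    have h1 := S.dist_add_of_mem hmem
    rw [S.dist_adj h.symm] at h1
    omega
  have hp : ((S.geod S.root a).concat h).IsPath := by
    rw [← Walk.isPath_reverse_iff, Walk.reverse_concat]
    exact ((S.geod_isPath S.root a).reverse).cons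
      (by rwa [Walk.support_reverse, List.mem_reverse])
  rw [← S.geod_unique _ hp, Walk.support_concat]
  simp [Walk.end_mem_support]

lemma wedge_adj {a b : V} (h : S.T.Adj a b)
    (hd : S.T.dist S.root a + 1 = S.T.dist S.root b) : S.wedge a b = a :=
  S.wedge_unique (Walk.end_mem_support _) (S.adj_mem_support h hd)
    (fun y hy _ => by have h2 := S.dist_add_of_mem hy; omega)

lemma vle_parent {a b : V} (h : S.T.Adj a b)
    (hd : S.T.dist S.root a + 1 = S.T.dist S.root b) : S.vle a b :=
  Or.inl (S.wedge_adj h hd)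

lemma not_vle_child {a b : V} (h : S.T.Adj a b)
    (hd : S.T.dist S.root a + 1 = S.T.dist S.root b) : ¬ S.vle b a := by
  rintro (h1 | ⟨h1, h2⟩)
  · rw [S.wedge_comm, S.wedge_adj h hd] at h1
    exact h.ne h1
  · rw [S.wedge_comm, S.wedge_adj h hd, S.gfun_self] at h2
    omega

lemma tau_iota {a b : V} (h : S.T.Adj a b)
    (hd : S.T.dist S.root a + 1 = S.T.dist S.root b) :
    S.tau s(a,b) = a ∧ S.iota s(a,b) = b := by
  have hout : s((Quot.out s(a,b)).1, (Quot.out s(a,b)).2) = s(a,b) := Quot.out_eq _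
  rw [Sym2.eq_iff] at hout
  unfold tau iota
  rcases hout with ⟨h1, h2⟩ | ⟨h1, h2⟩
  · rw [h1, h2, if_pos (S.vle_parent h hd), if_pos (S.vle_parent h hd)]
    exact ⟨rfl, rfl⟩
  · rw [h1, h2, if_neg (S.not_vle_child h hd), if_neg (S.not_vle_child h hd)]
    exact ⟨rfl, rfl⟩

lemma edge_struct {e : Sym2 V} (he : e ∈ S.T.edgeSet) :
    S.T.Adj (S.tau e) (S.iota e) ∧
      S.T.dist S.root (S.tau e) + 1 = S.T.dist S.root (S.iota e) ∧
      e = s(S.tau e, S.iota e) := by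
  induction e using Sym2.ind with
  | _ a b =>
    have hadj : S.T.Adj a b := he
    rcases S.adj_dist_cases hadj with hd | hd
    · obtain ⟨ht, hi⟩ := S.tau_iota hadj hd
      rw [ht, hi]
      exact ⟨hadj, hd, rfl⟩
    · have hswap : s(a,b) = s(b,a) := Sym2.eq_swap
      rw [hswap]
      obtain ⟨ht, hi⟩ := S.tau_iota hadj.symm hd
      rw [ht, hi]
      exact ⟨hadj.symm, hd, rfl⟩

lemma iota_ne_root {e : Sym2 V} (he : e ∈ S.T.edgeSet) : S.iota e ≠ S.root := by
  obtain ⟨hadj, hd, hrep⟩ := S.edge_struct he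
  intro hh
  rw [hh] at hd
  rw [SimpleGraph.dist_self] at hd
  omega

lemma eV_iota {e : Sym2 V} (he : e ∈ S.T.edgeSet) : S.eV (S.iota e) = e := by
  obtain ⟨hadj, hd, hrep⟩ := S.edge_struct he
  have hroot := S.iota_ne_root he
  have hpar : S.tau e = S.par (S.iota e) := S.par_unique hroot hadj.symm hd
  rw [S.eV_eq, ← hpar, Sym2.eq_swap]
  exact hrep.symm

lemma ncdeg_ge_two {x a b : V} (hab : a ≠ b) (ha : S.T.Adj x a) (hb : S.T.Adj x b) :
    2 ≤ ncdeg S.T x := by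
  have hsub : ({a, b} : Set V) ⊆ S.T.neighborSet x := by
    rintro y (rfl | rfl)
    · exact ha
    · exact hb
  calc 2 = ({a, b} : Set V).ncard := (Set.ncard_pair hab).symm
    _ ≤ _ := Set.ncard_le_ncard hsub (Set.toFinite _)

lemma essential (hGT : S.G = S.T) (v₀ : V)
    (huniq : ∀ w : V, 3 ≤ ncdeg S.G w → w = v₀)
    {x a b : V} (hab : a ≠ b) (ha : S.T.Adj x a) (hb : S.T.Adj x b)
    (hda : S.T.dist S.root a = S.T.dist S.root x + 1)
    (hdb : S.T.dist S.root b = S.T.dist S.root x + 1) : x = v₀ := by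
  by_cases hx : x = S.root
  · subst hx
    have h2 := S.ncdeg_ge_two hab ha hb
    rw [S.root_deg] at h2
    omega
  · have hpadj := S.par_adj hx
    have hpd := S.par_dist hx
    have hpa : a ≠ S.par x := by intro h; rw [← h] at hpd; omega
    have hpb : b ≠ S.par x := by intro h; rw [← h] at hpd; omega
    have hsub : ({a, b, S.par x} : Set V) ⊆ S.T.neighborSet x := by
      rintro y (rfl | rfl | rfl)
      · exact ha
      · exact hb
      · exact hpadj
    have h3 : 3 ≤ ncdeg S.T x := by
      have hcard : ({a, b, S.par x} : Set V).ncard = 3 := by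
        rw [Set.ncard_insert_of_notMem (by simp [hab, hpa]), Set.ncard_pair hpb]
      calc 3 = ({a, b, S.par x} : Set V).ncard := hcard.symm
        _ ≤ _ := Set.ncard_le_ncard hsub (Set.toFinite _)
    exact huniq x (by rwa [hGT])

lemma step {u m : V} (hm : m ∈ (S.geod S.root u).support) (hmu : m ≠ u) :
    S.T.Adj m ((S.geod m u).getVert 1) ∧
    ((S.geod m u).getVert 1) ∈ (S.geod S.root u).support ∧
    S.T.dist S.root ((S.geod m u).getVert 1) = S.T.dist S.root m + 1 := by
  have hadj := S.fs_adj hmu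
  have hxm : (S.geod m u).getVert 1 ∈ (S.geod m u).support := S.fs_mem hmu
  have hx : (S.geod m u).getVert 1 ∈ (S.geod S.root u).support :=
    S.support_geod_subset_right hm hxm
  have h1 := S.dist_add_of_mem hx
  have h2 := S.dist_add_of_mem hm
  have h3 := S.fs_dist hmu
  exact ⟨hadj, hx, by omega⟩

lemma dichotomy (hGT : S.G = S.T) (v₀ : V)
    (huniq : ∀ w : V, 3 ≤ ncdeg S.G w → w = v₀) (w : V) :
    w ∈ (S.geod S.root v₀).support ∨ v₀ ∈ (S.geod S.root w).support := by
  obtain ⟨h1, h2, hmax⟩ := S.wedge_spec w v₀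
  by_cases hmw : S.wedge w v₀ = w
  · left; rw [← hmw]; exact h2
  by_cases hmv : S.wedge w v₀ = v₀
  · right; rw [← hmv]; exact h1
  exfalso
  obtain ⟨ha, hamem, had⟩ := S.step h1 hmw
  obtain ⟨hb, hbmem, hbd⟩ := S.step h2 hmv
  have hne : (S.geod (S.wedge w v₀) w).getVert 1 ≠ (S.geod (S.wedge w v₀) v₀).getVert 1 := by
    intro h
    have h4 := hmax _ hamem (h ▸ hbmem)
    omega
  exact hmv (S.essential hGT v₀ huniq hne ha hb had hbd)

lemma gfun_v0_ne_zero {v₀ : V} (hv₀root : v₀ ≠ S.root) {u : V}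
    (hmem : v₀ ∈ (S.geod S.root u).support) (hu : u ≠ v₀) : S.gfun v₀ u ≠ 0 := by
  obtain ⟨hadj, hxmem, hxd⟩ := S.step hmem (Ne.symm hu)
  have hg : S.gfun v₀ u = S.label v₀ ((S.geod v₀ u).getVert 1) := if_neg (Ne.symm hu)
  rw [hg]
  intro h0
  have h1 := (S.label_zero v₀ hv₀root _ hadj).mp h0
  omega

lemma both_mem_eq {u v : V} (h1 : u ∈ (S.geod S.root v).support)
    (h2 : v ∈ (S.geod S.root u).support) : u = v := by
  have a1 := S.dist_add_of_mem h1
  have a2 := S.dist_add_of_mem h2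
  have e2 : S.T.dist v u = S.T.dist u v := SimpleGraph.dist_comm
  have h3 : S.T.dist u v = 0 := by omega
  exact S.dist_eq_zero_iff.mp h3

lemma fs_eq_of_mem {a u w : V} (hu : u ∈ (S.geod a w).support) (hau : a ≠ u) (haw : a ≠ w) :
    (S.geod a u).getVert 1 = (S.geod a w).getVert 1 := by
  have hxmem := S.fs_mem haw
  have hadj := S.fs_adj haw
  rcases S.support_split hxmem hu with h | h
  · have h1 := S.dist_add_of_mem h
    rw [S.dist_adj hadj] at h1
    have hdau : S.T.dist a u ≠ 0 := fun hh => hau (S.dist_eq_zero_iff.mp hh)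
    have hd1 : S.T.dist a u = 1 := by omega
    have hd0 : S.T.dist u ((S.geod a w).getVert 1) = 0 := by omega
    have hux : u = (S.geod a w).getVert 1 := S.dist_eq_zero_iff.mp hd0
    rw [← hux]
    have hlen : (S.geod a u).length = 1 := by rw [S.length_geod]; exact hd1
    calc (S.geod a u).getVert 1 = (S.geod a u).getVert (S.geod a u).length := by rw [hlen]
      _ = u := Walk.getVert_length _
  · have h1 := S.dist_add_of_mem h
    have h2 := S.fs_dist haw
    have h3 := S.dist_add_of_mem hu
    exact (S.fs_unique hau hadj (by omega)).symm

lemma kemb (hGT : S.G = S.T) (v₀ : V) (hv₀ : 3 ≤ ncdeg S.G v₀)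
    (huniq : ∀ w : V, 3 ≤ ncdeg S.G w → w = v₀) {u w : V} (h : S.vlt u w) :
    toLex ((if u ∈ (S.geod S.root v₀).support then 0 else S.gfun v₀ u), S.T.dist S.root u)
      < toLex ((if w ∈ (S.geod S.root v₀).support then 0 else S.gfun v₀ w), S.T.dist S.root w) := by
  obtain ⟨hle, hne⟩ := h
  have hv₀root : v₀ ≠ S.root := by
    intro hh
    have h1 : 3 ≤ ncdeg S.T v₀ := by rwa [hGT] at hv₀
    rw [hh, S.root_deg] at h1
    omega
  rw [Prod.Lex.lt_iff]; simp only [ofLex_toLex]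
  rcases hle with hm | ⟨hm, hg⟩
  · have humem : u ∈ (S.geod S.root w).support := hm ▸ (S.wedge_spec u w).2.1
    have hdu := S.dist_add_of_mem humem
    have hduw : S.T.dist u w ≠ 0 := fun hh => hne (S.dist_eq_zero_iff.mp hh)
    by_cases hu : u ∈ (S.geod S.root v₀).support
    · rw [if_pos hu]
      by_cases hw : w ∈ (S.geod S.root v₀).support
      · rw [if_pos hw]; right; exact ⟨rfl, by omega⟩
      · rw [if_neg hw]; left
        have hwv₀ : v₀ ∈ (S.geod S.root w).support :=
          (S.dichotomy hGT v₀ huniq w).resolve_left hw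
        have hwne : w ≠ v₀ := fun hh => hw (hh ▸ Walk.end_mem_support _)
        have h2 := S.gfun_v0_ne_zero hv₀root hwv₀ hwne
        omega
    · rw [if_neg hu]
      have huv₀ : v₀ ∈ (S.geod S.root u).support :=
        (S.dichotomy hGT v₀ huniq u).resolve_left hu
      have hw : w ∉ (S.geod S.root v₀).support := by
        intro hw
        have b1 := S.dist_add_of_mem hw
        have b2 := S.dist_add_of_mem huv₀
        omega
      rw [if_neg hw]
      have hv₀w : v₀ ∈ (S.geod S.root w).support := S.support_geod_subset_left humem huv₀
      have huv : u ≠ v₀ := fun hh => hu (hh ▸ Walk.end_mem_support _)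
      have hwv : w ≠ v₀ := fun hh => hw (hh ▸ Walk.end_mem_support _)
      rcases S.support_split hv₀w humem with hcase | hcase
      · exact absurd hcase hu
      · have hfs := S.fs_eq_of_mem hcase (Ne.symm huv) (Ne.symm hwv)
        right
        refine ⟨?_, by omega⟩
        show S.gfun v₀ u = S.gfun v₀ w
        rw [Setup.gfun, Setup.gfun, if_neg (Ne.symm huv), if_neg (Ne.symm hwv), hfs]
  · have hmw : S.wedge u w ≠ w := by
      intro hh; rw [hh, S.gfun_self] at hg; omega
    obtain ⟨h1, h2, hmax⟩ := S.wedge_spec u w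
    obtain ⟨ha, hamem, had⟩ := S.step h1 hm
    obtain ⟨hb, hbmem, hbd⟩ := S.step h2 hmw
    have hab : (S.geod (S.wedge u w) u).getVert 1 ≠ (S.geod (S.wedge u w) w).getVert 1 := by
      intro hh
      have h4 := hmax _ hamem (hh ▸ hbmem)
      omega
    have hmv₀ : S.wedge u w = v₀ := S.essential hGT v₀ huniq hab ha hb had hbd
    have hu : u ∉ (S.geod S.root v₀).support := by
      intro hcc
      exact hm (hmv₀.trans (S.both_mem_eq hcc (hmv₀ ▸ h1)).symm)
    have hww : w ∉ (S.geod S.root v₀).support := by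
      intro hcc
      exact hmw (hmv₀.trans (S.both_mem_eq hcc (hmv₀ ▸ h2)).symm)
    rw [if_neg hu, if_neg hww]
    left
    rw [hmv₀] at hg
    exact hg

end Setup


end Toolkit



/-- If `Γ` is a tree with exactly one essential vertex (`T = Γ`), then every critical cell
of `UD^nΓ` has dimension at most 1. -/
theorem stmt11 {V : Type} [Fintype V] [DecidableEq V] (S : Setup V) (n : ℕ) (hn : 1 ≤ n) (hsub : S.SuffSubdiv n)
    (hGT : S.G = S.T) (v₀ : V) (hv₀ : 3 ≤ ncdeg S.G v₀)
    (huniq : ∀ w : V, 3 ≤ ncdeg S.G w → w = v₀) :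
    ∀ c : Finset (Sym2 V), S.IsCell n c → S.Critical n c → Setup.dim c ≤ 1 := by
  intro c hc hcrit
  by_contra hdim
  push_neg at hdim
  obtain ⟨hnred, hncol⟩ := hcrit
  obtain ⟨i, hi⟩ : ∃ i, Setup.dim c = i + 1 := ⟨Setup.dim c - 1, by omega⟩
  have hige : 1 ≤ i := by omega
  rw [Setup.Redundant, hi] at hnred
  -- c has no unblocked vertex
  have hnub : ∀ v, ¬ S.Unblocked c v := by
    intro v hv
    have hB : ∃ c₀, S.IsCell n c₀ ∧ Setup.dim c₀ = i ∧ S.RedundantAux n i c₀ ∧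
        S.PrincipalRedOf c₀ c := by
      by_contra hB
      exact hnred ⟨⟨v, hv⟩, hB⟩
    obtain ⟨c₀, h1, h2, h3, h4⟩ := hB
    exact hncol ⟨c₀, h1, by rw [Setup.Redundant, h2]; exact h3, h4⟩
  -- there are at least two edges in c, one of which avoids v₀
  have hdim2 : 2 ≤ (c.filter (fun s => ¬ s.IsDiag)).card := by
    rw [← Setup.dim]; omega
  obtain ⟨e₁, he₁, e₂, he₂, hne12⟩ := Finset.one_lt_card.mp (by omega : 1 < (c.filter (fun s => ¬ s.IsDiag)).card)
  rw [Finset.mem_filter] at he₁ he₂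
  have hv0free : ∃ e ∈ c, ¬ e.IsDiag ∧ v₀ ∉ e := by
    by_cases h1 : v₀ ∈ e₁
    · exact ⟨e₂, he₂.1, he₂.2, fun h2 => hc.2.2 e₁ he₁.1 e₂ he₂.1 hne12 v₀ h1 h2⟩
    · exact ⟨e₁, he₁.1, he₁.2, h1⟩
  -- order-respecting edges avoiding v₀ exist
  have horesp : ∀ e ∈ c, ¬ e.IsDiag → v₀ ∉ e → S.OrderResp c e := by
    intro e hec hed hev
    have heG : e ∈ S.G.edgeSet := (hc.2.1 e hec).resolve_left hed
    have heT : e ∈ S.T.edgeSet := hGT ▸ heG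
    refine ⟨hec, heT, ?_⟩
    intro v hvroot hvdiag htau
    exfalso
    obtain ⟨hadj, hd, hrep⟩ := S.edge_struct heT
    have htaumem : S.tau e ∈ e := by
      have h0 := Sym2.mem_mk_left (S.tau e) (S.iota e)
      rwa [← hrep] at h0
    have hiotamem : S.iota e ∈ e := by
      have h0 := Sym2.mem_mk_right (S.tau e) (S.iota e)
      rwa [← hrep] at h0
    have hdiagne : Sym2.diag v ≠ e := fun hh => hed (hh ▸ Sym2.diag_isDiag v)
    rw [S.eV_eq, Sym2.mem_iff] at htau
    rcases htau with h | h
    · exact hc.2.2 (Sym2.diag v) hvdiag e hec hdiagne v (mem_diag_iff.mpr rfl)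
        (by rw [h] at htaumem; exact htaumem)
    · have hpadj := S.par_adj hvroot
      have hpd := S.par_dist hvroot
      have hvne : v ≠ S.iota e := by
        intro hh
        exact hc.2.2 (Sym2.diag v) hvdiag e hec hdiagne v (mem_diag_iff.mpr rfl) (hh ▸ hiotamem)
      have htv₀ : S.tau e = v₀ := by
        refine S.essential hGT v₀ huniq hvne (by rw [h]; exact hpadj.symm) hadj ?_ (by omega)
        rw [h]; omega
      exact hev (htv₀ ▸ htaumem)
  -- choose a k-minimal order-respecting edge
  set E := c.filter (fun e => ¬ e.IsDiag ∧ S.OrderResp c e) with hE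
  have hEne : E.Nonempty := by
    obtain ⟨e, hec, hed, hev⟩ := hv0free
    exact ⟨e, Finset.mem_filter.mpr ⟨hec, hed, horesp e hec hed hev⟩⟩
  obtain ⟨e, heE, hemin⟩ := Finset.exists_min_image E
    (fun e' => toLex ((if S.iota e' ∈ (S.geod S.root v₀).support then 0 else S.gfun v₀ (S.iota e')),
      S.T.dist S.root (S.iota e'))) hEne
  rw [hE, Finset.mem_filter] at heE
  obtain ⟨hec, hed, hor⟩ := heE
  have heT : e ∈ S.T.edgeSet := hor.2.1
  obtain ⟨hadj, hd, hrep⟩ := S.edge_struct heT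
  have hvroot : S.iota e ≠ S.root := S.iota_ne_root heT
  have heV : S.eV (S.iota e) = e := S.eV_iota heT
  have hvmem : S.iota e ∈ e := by
    have h0 := Sym2.mem_mk_right (S.tau e) (S.iota e)
    rwa [← hrep] at h0
  have hamem : S.tau e ∈ e := by
    have h0 := Sym2.mem_mk_left (S.tau e) (S.iota e)
    rwa [← hrep] at h0
  have hdiagv_notc : Sym2.diag (S.iota e) ∉ c := by
    intro hh
    exact hc.2.2 (Sym2.diag (S.iota e)) hh e hec (fun h => hed (h ▸ Sym2.diag_isDiag _))
      (S.iota e) (mem_diag_iff.mpr rfl) hvmem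
  set c₀ := insert (Sym2.diag (S.iota e)) (c.erase e) with hc₀def
  have hmem_c₀ : ∀ s, s ∈ c₀ ↔ s = Sym2.diag (S.iota e) ∨ (s ∈ c ∧ s ≠ e) := by
    intro s
    simp only [hc₀def, Finset.mem_insert, Finset.mem_erase]
    tauto
  -- c₀ is a cell
  have hc₀cell : S.IsCell n c₀ := by
    refine ⟨?_, ?_, ?_⟩
    · rw [hc₀def, Finset.card_insert_of_notMem
        (fun hh => hdiagv_notc (Finset.mem_of_mem_erase hh)), Finset.card_erase_of_mem hec]
      have h1 : 1 ≤ c.card := Finset.card_pos.mpr ⟨e, hec⟩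
      have h2 := hc.1
      omega
    · intro s hs
      rcases (hmem_c₀ s).mp hs with rfl | ⟨hsc, _⟩
      · exact Or.inl (Sym2.diag_isDiag _)
      · exact hc.2.1 s hsc
    · intro s hs t ht hst x hxs hxt
      rcases (hmem_c₀ s).mp hs with rfl | ⟨hsc, hse⟩ <;>
        rcases (hmem_c₀ t).mp ht with rfl | ⟨htc, hte⟩
      · exact hst rfl
      · rw [mem_diag_iff] at hxs
        exact hc.2.2 e hec t htc (fun h => hte h.symm) (S.iota e) hvmem (hxs ▸ hxt)
      · rw [mem_diag_iff] at hxt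
        exact hc.2.2 s hsc e hec hse x hxs (hxt ▸ hvmem)
      · exact hc.2.2 s hsc t htc hst x hxs hxt
  -- dim c₀ = i
  have hdimc₀ : Setup.dim c₀ = i := by
    rw [Setup.dim, hc₀def, Finset.filter_insert,
      if_neg (by simp [Sym2.diag_isDiag]), Finset.filter_erase,
      Finset.card_erase_of_mem (Finset.mem_filter.mpr ⟨hec, hed⟩)]
    rw [Setup.dim] at hi
    omega
  -- iota e is unblocked in c₀
  have hvub : S.Unblocked c₀ (S.iota e) := by
    refine ⟨Finset.mem_insert_self _ _, ?_⟩
    rintro (h | ⟨s, hs, hsne, x, hx1, hx2⟩)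
    · exact hvroot h
    · rw [heV] at hx1
      rcases (hmem_c₀ s).mp hs with rfl | ⟨hsc, hse⟩
      · exact hsne rfl
      · exact hc.2.2 e hec s hsc (fun h => hse h.symm) x hx1 hx2
  -- iota e is the minimal unblocked vertex of c₀
  have hvmin : ∀ u, S.Unblocked c₀ u → S.vle (S.iota e) u := by
    intro u hu
    obtain ⟨hudiag, hunb⟩ := hu
    rcases (hmem_c₀ _).mp hudiag with hdd | ⟨hudc, _⟩
    · rw [Sym2.diag_injective hdd]
      exact S.vle_refl _
    · have huroot : u ≠ S.root := fun hh => hunb (Or.inl hh)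
      have hblocked : S.Blocked c u := by
        by_contra hbb
        exact hnub u ⟨hudc, hbb⟩
      rcases hblocked with hh | ⟨s, hsc, hsne, x, hx1, hx2⟩
      · exact absurd hh huroot
      · by_cases hse : s = e
        · rw [S.eV_eq, Sym2.mem_iff] at hx1
          rw [hse] at hx2
          rcases hx1 with h1 | hxp
          · exact (hc.2.2 (Sym2.diag u) hudc e hec (fun h => hed (h ▸ Sym2.diag_isDiag u)) u
              (mem_diag_iff.mpr rfl) (h1 ▸ hx2)).elim
          · rw [hrep, Sym2.mem_iff] at hx2
            rcases hx2 with hxa | hxv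
            · exact (hor.2.2 u huroot hudc (by
                rw [S.eV_eq, Sym2.mem_iff]
                exact Or.inr (hxa.symm.trans hxp))).1
            · exfalso
              apply hunb
              refine Or.inr ⟨Sym2.diag (S.iota e), Finset.mem_insert_self _ _, ?_, S.iota e,
                ?_, mem_diag_iff.mpr rfl⟩
              · intro hh
                exact hdiagv_notc (hh ▸ hudc)
              · rw [S.eV_eq, Sym2.mem_iff]
                exact Or.inr (hxv.symm.trans hxp)
        · exfalso
          apply hunb
          exact Or.inr ⟨s, (hmem_c₀ s).mpr (Or.inr ⟨hsc, hse⟩), hsne, x, hx1, hx2⟩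
  have hredform : c = S.redFrom c₀ (S.iota e) := by
    rw [Setup.redFrom, heV, hc₀def,
      Finset.erase_insert (fun hh => hdiagv_notc (Finset.mem_of_mem_erase hh)),
      Finset.insert_erase hec]
  have hpro : S.PrincipalRedOf c₀ c := ⟨S.iota e, hvub, hvmin, hredform⟩
  -- c₀ is redundant
  obtain ⟨j, hj⟩ : ∃ j, i = j + 1 := ⟨i - 1, by omega⟩
  have hredaux : S.RedundantAux n i c₀ := by
    rw [hj]
    refine ⟨⟨S.iota e, hvub⟩, ?_⟩
    rintro ⟨c₁, hc₁cell, hdimc₁, hraux₁, w, hwub, hwmin, hc₀eq⟩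
    obtain ⟨hwdiag, hwnb⟩ := hwub
    have hwroot : w ≠ S.root := fun hh => hwnb (Or.inl hh)
    have hwadj := S.par_adj hwroot
    have hwd := S.par_dist hwroot
    have heVw_ndiag : ¬ (S.eV w).IsDiag := by
      rw [S.eV_eq, Sym2.mk_isDiag_iff]
      exact hwadj.ne
    have heVw_c₀ : S.eV w ∈ c₀ := by rw [hc₀eq, Setup.redFrom]; exact Finset.mem_insert_self _ _
    have heVw_ne_diagv : S.eV w ≠ Sym2.diag (S.iota e) :=
      fun hh => heVw_ndiag (hh ▸ Sym2.diag_isDiag _)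
    obtain ⟨heVw_c, heVw_ne_e⟩ : S.eV w ∈ c ∧ S.eV w ≠ e :=
      ((hmem_c₀ _).mp heVw_c₀).resolve_left heVw_ne_diagv
    have hw_mem_eVw : w ∈ S.eV w := by rw [S.eV_eq]; exact Sym2.mem_mk_left _ _
    have hpar_mem_eVw : S.par w ∈ S.eV w := by rw [S.eV_eq]; exact Sym2.mem_mk_right _ _
    have heVwT : S.eV w ∈ S.T.edgeSet := by rw [S.eV_eq]; exact hwadj
    have htauw : S.tau (S.eV w) = S.par w ∧ S.iota (S.eV w) = w := by
      have hsw : S.eV w = s(S.par w, w) := by rw [S.eV_eq]; exact Sym2.eq_swap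
      rw [hsw]
      exact S.tau_iota hwadj.symm (by omega)
    have hw_notin_e : w ∉ e :=
      fun hh => hc.2.2 (S.eV w) heVw_c e hec heVw_ne_e w hw_mem_eVw hh
    have hwv : w ≠ S.iota e := fun hh => hw_notin_e (hh ▸ hvmem)
    have heVw_not_c₁ : S.eV w ∉ c₁ := by
      intro hh
      exact hc₁cell.2.2 (Sym2.diag w) hwdiag (S.eV w) hh
        (fun h2 => heVw_ndiag (h2 ▸ Sym2.diag_isDiag w)) w (mem_diag_iff.mpr rfl) hw_mem_eVw
    have hmem_c₁ : ∀ s, s ∈ c₁ ↔ s = Sym2.diag w ∨ (s ∈ c₀ ∧ s ≠ S.eV w) := by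
      intro s
      constructor
      · intro hs
        by_cases hsd : s = Sym2.diag w
        · exact Or.inl hsd
        · refine Or.inr ⟨?_, ?_⟩
          · rw [hc₀eq, Setup.redFrom]
            exact Finset.mem_insert_of_mem (Finset.mem_erase.mpr ⟨hsd, hs⟩)
          · intro hh
            rw [hh] at hs
            exact heVw_not_c₁ hs
      · rintro (rfl | ⟨hs₀, hsne⟩)
        · exact hwdiag
        · rw [hc₀eq, Setup.redFrom] at hs₀
          rcases Finset.mem_insert.mp hs₀ with hh | hh
          · exact absurd hh hsne
          · exact Finset.mem_of_mem_erase hh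
    have hdiagv_c₁ : Sym2.diag (S.iota e) ∈ c₁ :=
      (hmem_c₁ _).mpr (Or.inr ⟨Finset.mem_insert_self _ _, Ne.symm heVw_ne_diagv⟩)
    have hvub₁ : S.Unblocked c₁ (S.iota e) := by
      refine ⟨hdiagv_c₁, ?_⟩
      rintro (h | ⟨s, hs, hsne, x, hx1, hx2⟩)
      · exact hvroot h
      · rw [heV] at hx1
        rcases (hmem_c₁ s).mp hs with rfl | ⟨hs₀, hsw⟩
        · rw [mem_diag_iff] at hx2
          exact hw_notin_e (hx2 ▸ hx1)
        · exact hvub.2 (Or.inr ⟨s, hs₀, hsne, x, by rw [heV]; exact hx1, hx2⟩)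
    have hvltwv : S.vlt w (S.iota e) := ⟨hwmin (S.iota e) hvub₁, hwv⟩
    by_cases horw : S.OrderResp c (S.eV w)
    · have hEmem : S.eV w ∈ E := Finset.mem_filter.mpr ⟨heVw_c, heVw_ndiag, horw⟩
      have hmin := hemin _ hEmem
      rw [htauw.2] at hmin
      have hlt := S.kemb hGT v₀ hv₀ huniq hvltwv
      exact absurd hmin (not_le.mpr hlt)
    · have hz : ∃ z, z ≠ S.root ∧ Sym2.diag z ∈ c ∧ S.tau (S.eV w) ∈ S.eV z ∧
          ¬ S.vlt (S.iota (S.eV w)) z := by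
        by_contra hzz
        push_neg at hzz
        exact horw ⟨heVw_c, heVwT, fun z hz1 hz2 hz3 => hzz z hz1 hz2 hz3⟩
      obtain ⟨z, hzroot, hzdiag, hztau, hznlt⟩ := hz
      rw [htauw.1] at hztau
      rw [htauw.2] at hznlt
      rw [S.eV_eq, Sym2.mem_iff] at hztau
      have hz_ne_w : z ≠ w := by
        intro hh
        apply hc.2.2 (Sym2.diag z) hzdiag (S.eV w) heVw_c
          (fun h => heVw_ndiag (h.symm ▸ Sym2.diag_isDiag z)) z (mem_diag_iff.mpr rfl)
        rw [hh]
        exact hw_mem_eVw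
      rcases hztau with hcase | hcase
      · exact hc.2.2 (Sym2.diag z) hzdiag (S.eV w) heVw_c
          (fun h => heVw_ndiag (h.symm ▸ Sym2.diag_isDiag z)) z (mem_diag_iff.mpr rfl)
          (by rw [← hcase]; exact hpar_mem_eVw)
      · have hdiagz_ne_e : Sym2.diag z ≠ e := fun h => hed (h ▸ Sym2.diag_isDiag z)
        have hzv : z ≠ S.iota e := fun hh => hc.2.2 (Sym2.diag z) hzdiag e hec hdiagz_ne_e
          z (mem_diag_iff.mpr rfl) (hh ▸ hvmem)
        have hdiagz_c₀ : Sym2.diag z ∈ c₀ := (hmem_c₀ _).mpr (Or.inr ⟨hzdiag, hdiagz_ne_e⟩)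
        have hdiagz_c₁ : Sym2.diag z ∈ c₁ := (hmem_c₁ _).mpr
          (Or.inr ⟨hdiagz_c₀, fun h => heVw_ndiag (h.symm ▸ Sym2.diag_isDiag z)⟩)
        have hzub : S.Unblocked c₁ z := by
          refine ⟨hdiagz_c₁, ?_⟩
          rintro (h | ⟨s, hs, hsne, x, hx1, hx2⟩)
          · exact hzroot h
          · rw [S.eV_eq, Sym2.mem_iff] at hx1
            rcases (hmem_c₁ s).mp hs with rfl | ⟨hs₀, hsw⟩
            · rw [mem_diag_iff] at hx2
              rcases hx1 with h1 | h1
              · exact hz_ne_w (h1.symm.trans hx2)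
              · exact hwadj.ne ((hx2.symm.trans h1).trans hcase.symm)
            · rcases (hmem_c₀ s).mp hs₀ with rfl | ⟨hsc, hse⟩
              · rw [mem_diag_iff] at hx2
                rcases hx1 with h1 | h1
                · exact hzv (h1.symm.trans hx2)
                · apply hc.2.2 e hec (S.eV w) heVw_c (Ne.symm heVw_ne_e) (S.iota e) hvmem
                  rw [show S.iota e = S.par w from (hx2.symm.trans h1).trans hcase.symm]
                  exact hpar_mem_eVw
              · rcases hx1 with h1 | h1
                · exact hc.2.2 (Sym2.diag z) hzdiag s hsc (fun h => hsne h.symm) z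
                    (mem_diag_iff.mpr rfl) (h1 ▸ hx2)
                · apply hc.2.2 (S.eV w) heVw_c s hsc (fun h => hsw h.symm) (S.par w) hpar_mem_eVw
                  rw [show S.par w = x from hcase.trans h1.symm]
                  exact hx2
        exact hznlt ⟨hwmin z hzub, fun hh => hz_ne_w (hh.symm)⟩
  exact hncol ⟨c₀, hc₀cell, by rw [Setup.Redundant, hdimc₀]; exact hredaux, hpro⟩

end GraphBraid
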